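/- Let T : M_{n1}(ℂ) → M_{n2}(ℂ) be a completely positive operator with cap(T) > 0. Then for every ε > 0 there exists an operator scaling T' of T, i.e., T'(X) = B·T(C X C†)·B† for some invertible n2×n2 matrix B and invertible n1×n1 matrix C, such that ds(T') ≤ ε. -/

import Mathlib

open Matrix BigOperators
open scoped ComplexOrder

/-- The capacity of an operator `T : M_I(ℂ) → M_J(ℂ)`:
`cap(T) = inf { det((|J|/|I|) • T(X)) : X positive definite, det X = 1 }`. -/
noncomputable def capacity {I J : Type} [Fintype I] [DecidableEq I] [Fintype J] [DecidableEq J]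
    (T : Matrix I I ℂ → Matrix J J ℂ) : ℝ :=
  sInf { r : ℝ | ∃ X : Matrix I I ℂ, X.PosDef ∧ X.det = 1 ∧
    r = ((((Fintype.card J : ℂ) / (Fintype.card I : ℂ)) • T X).det).re }

/-- The distance to double stochasticity of the completely positive operator with Kraus
operators `A₁, …, A_m`:
`ds(T) = tr[(T((n2/n1)·I) − I)²] + tr[(T*(I) − I)²]`. -/
noncomputable def dsDist {n1 n2 m : ℕ} (A : Fin m → Matrix (Fin n2) (Fin n1) ℂ) : ℝ :=
  (Matrix.trace ((((n2 : ℂ) / (n1 : ℂ)) • (∑ i, A i * (A i)ᴴ) - 1) ^ 2)).re +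
    (Matrix.trace ((∑ i, (A i)ᴴ * A i - 1) ^ 2)).re

/-!
Take `X` with `det X = 1` whose value `det (κ T(X))`, `κ = n₂ / n₁`, is within a factor `e^a` of
the capacity. Choose `B` with `κ B T(X) Bᴴ = I`; positivity of the capacity rules out a common
kernel of the `Aᵢ`, so `S = T*(BᴴB)` is positive definite, and `C` with `Cᴴ S C = I` makes
`T' = B T(C · Cᴴ) Bᴴ` satisfy `T'*(I) = I`. Since `tr (X S) = n₁`, AM-GM gives `det S ≤ 1`, hence
`det (κ T(S⁻¹)) ≥ cap (T)` and `Q = κ T'(I)` has `det Q ≥ cap (T) / det (κ T(X)) ≥ e^{-a}` and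
`tr Q = n₂`. A quantitative AM-GM inequality, from `(x - 1)² ≤ 2 (x + 1) (x - 1 - log x)`, turns
this into `tr (Q - I)² ≤ 2 (n₂ + 1) a`, which is `ds(T')` as `T'*(I) = I`.
-/

theorem Real.sq_sub_one_le_mul_sub_one_sub_log {x : ℝ} (hx : 0 < x) :
    (x - 1) ^ 2 ≤ 2 * (x + 1) * (x - 1 - Real.log x) := by
  obtain ⟨s, hs, rfl⟩ : ∃ s : ℝ, 0 < s ∧ s ^ 2 = x :=
    ⟨√x, Real.sqrt_pos.2 hx, Real.sq_sqrt hx.le⟩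
  have hlog : Real.log (s ^ 2) ≤ 2 * (s - 1) := by
    rw [Real.log_pow]; push_cast; linarith [Real.log_le_sub_one_of_pos hs]
  nlinarith [sq_nonneg (s - 1), sq_nonneg (s + 1),
    mul_nonneg (sq_nonneg (s - 1)) (sq_nonneg (s - 1))]

theorem Real.sum_sq_sub_one_le_mul_neg_sum_log {ι : Type*} [Fintype ι] {μ : ι → ℝ}
    (hμ : ∀ i, 0 < μ i) (hsum : ∑ i, μ i = Fintype.card ι) :
    ∑ i, (μ i - 1) ^ 2 ≤ 2 * (Fintype.card ι + 1) * -∑ i, Real.log (μ i) := by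
  have hle : ∀ i, μ i ≤ Fintype.card ι := fun i =>
    hsum ▸ Finset.single_le_sum (fun j _ => (hμ j).le) (Finset.mem_univ i)
  calc ∑ i, (μ i - 1) ^ 2
      ≤ ∑ i, 2 * (Fintype.card ι + 1) * (μ i - 1 - Real.log (μ i)) := by
        refine Finset.sum_le_sum fun i _ =>
          (Real.sq_sub_one_le_mul_sub_one_sub_log (hμ i)).trans ?_
        have := Real.log_le_sub_one_of_pos (hμ i)
        exact mul_le_mul_of_nonneg_right (by linarith [hle i]) (by linarith)
    _ = 2 * (Fintype.card ι + 1) * -∑ i, Real.log (μ i) := by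
        rw [← Finset.mul_sum, Finset.sum_sub_distrib, Finset.sum_sub_distrib, hsum]
        simp

namespace Matrix

variable {n : Type*} [Fintype n] [DecidableEq n] {M : Matrix n n ℂ}

theorem IsHermitian.re_det (hM : M.IsHermitian) : M.det.re = ∏ i, hM.eigenvalues i := by
  rw [hM.det_eq_prod_eigenvalues]
  norm_cast

theorem IsHermitian.re_trace (hM : M.IsHermitian) : M.trace.re = ∑ i, hM.eigenvalues i := by
  rw [hM.trace_eq_sum_eigenvalues]
  norm_cast

theorem IsHermitian.re_trace_sub_one_sq (hM : M.IsHermitian) :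
    ((M - 1) ^ 2).trace.re = ∑ i, (hM.eigenvalues i - 1) ^ 2 := by
  set U := hM.eigenvectorUnitary
  have hconj : (M - 1) ^ 2 = Unitary.conjStarAlgAut ℂ _ U
      (diagonal fun i => ((hM.eigenvalues i - 1) ^ 2 : ℝ)) := by
    conv_lhs => rw [hM.spectral_theorem]
    rw [← map_one (Unitary.conjStarAlgAut ℂ _ U), ← map_sub, ← map_pow, ← diagonal_one,
      diagonal_sub, diagonal_pow]
    congr 2
    ext i
    simp
  rw [hconj, Unitary.conjStarAlgAut_apply, trace_mul_cycle, Unitary.coe_star_mul_self, one_mul,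
    trace_diagonal, Complex.re_sum]
  simp only [Complex.ofReal_re]

theorem PosDef.re_det_pos (hM : M.PosDef) : 0 < M.det.re :=
  (Complex.pos_iff.1 hM.det_pos).1

theorem PosSemidef.ofReal_re_det (hM : M.PosSemidef) : (M.det.re : ℂ) = M.det :=
  (Complex.eq_re_of_ofReal_le hM.det_nonneg).symm

theorem PosDef.re_det_inv (hM : M.PosDef) : M⁻¹.det.re = M.det.re⁻¹ := by
  conv_lhs => rw [det_nonsing_inv, Ring.inverse_eq_inv', ← hM.posSemidef.ofReal_re_det]
  rw [← Complex.ofReal_inv, Complex.ofReal_re]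

theorem det_mul_mul_conjTranspose (B : Matrix n n ℂ) :
    (B * M * Bᴴ).det = Complex.normSq B.det * M.det := by
  rw [det_mul, det_mul, det_conjTranspose, mul_right_comm, Complex.star_def, Complex.mul_conj]

theorem PosDef.re_trace_sub_one_sq_le (hM : M.PosDef) (htr : M.trace = Fintype.card n) :
    ((M - 1) ^ 2).trace.re ≤ 2 * (Fintype.card n + 1) * -Real.log M.det.re := by
  have hsum : ∑ i, hM.1.eigenvalues i = Fintype.card n := by
    rw [← hM.1.re_trace, htr, Complex.natCast_re]
  rw [hM.1.re_trace_sub_one_sq, hM.1.re_det, Real.log_prod fun i _ => (hM.eigenvalues_pos i).ne']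
  exact Real.sum_sq_sub_one_le_mul_neg_sum_log hM.eigenvalues_pos hsum

theorem PosDef.re_det_le_one (hM : M.PosDef) (htr : M.trace = Fintype.card n) :
    M.det.re ≤ 1 := by
  have hsq : 0 ≤ ((M - 1) ^ 2).trace.re := by
    rw [hM.1.re_trace_sub_one_sq]
    positivity
  have hlog : Real.log M.det.re ≤ 0 := by
    nlinarith [hsq.trans (hM.re_trace_sub_one_sq_le htr)]
  exact (Real.log_nonpos_iff hM.re_det_pos.le).1 hlog

theorem PosDef.exists_isUnit_eq_conjTranspose_mul_self (hM : M.PosDef) :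
    ∃ U : Matrix n n ℂ, IsUnit U ∧ M = Uᴴ * U := by
  open scoped MatrixOrder in
  obtain ⟨U, rfl⟩ := CStarAlgebra.nonneg_iff_eq_star_mul_self.mp hM.posSemidef.nonneg
  have hdet := (isUnit_iff_isUnit_det _).1 hM.isUnit
  rw [det_mul] at hdet
  exact ⟨U, (isUnit_iff_isUnit_det _).2 (isUnit_of_mul_isUnit_right hdet), rfl⟩

theorem PosDef.exists_isUnit_mul_mul_conjTranspose_eq_one (hM : M.PosDef) :
    ∃ B : Matrix n n ℂ, IsUnit B ∧ B * M * Bᴴ = 1 := by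
  obtain ⟨U, hU, rfl⟩ := hM.exists_isUnit_eq_conjTranspose_mul_self
  have hUH : IsUnit Uᴴ := hU.star
  refine ⟨Uᴴ⁻¹, isUnit_nonsing_inv_iff.2 hUH, ?_⟩
  rw [conjTranspose_nonsing_inv, conjTranspose_conjTranspose, ← mul_assoc,
    nonsing_inv_mul _ ((isUnit_iff_isUnit_det _).1 hUH), one_mul,
    mul_nonsing_inv _ ((isUnit_iff_isUnit_det _).1 hU)]

theorem inv_eq_conjTranspose_mul_self_of_mul_mul_conjTranspose_eq_one {V S : Matrix n n ℂ}
    (h : V * S * Vᴴ = 1) : S⁻¹ = Vᴴ * V :=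
  inv_eq_left_inv (by rw [Matrix.mul_assoc]; exact mul_eq_one_comm.1 h)

theorem PosDef.re_det_le_one_of_trace_mul_eq {X S : Matrix n n ℂ} (hX : X.PosDef)
    (hXdet : X.det = 1) (hS : S.PosDef) (htr : (X * S).trace = Fintype.card n) :
    S.det.re ≤ 1 := by
  obtain ⟨U, hU, rfl⟩ := hX.exists_isUnit_eq_conjTranspose_mul_self
  have hUSU : (U * S * Uᴴ).PosDef :=
    hS.mul_mul_conjTranspose_same (vecMul_injective_iff_isUnit.2 hU)
  have hdet : (U * S * Uᴴ).det = S.det := by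
    rw [det_mul, det_conjTranspose] at hXdet
    rw [det_mul, det_mul, det_conjTranspose]
    linear_combination S.det * hXdet
  rw [← hdet]
  refine hUSU.re_det_le_one ?_
  rw [trace_mul_cycle, ← htr]

theorem det_add_vecMulVec {X : Matrix n n ℂ} (hX : IsUnit X.det) (u w : n → ℂ) :
    (X + vecMulVec u w).det = X.det * (1 + w ⬝ᵥ (X⁻¹ *ᵥ u)) := by
  rw [vecMulVec_eq Unit, det_add_replicateCol_mul_replicateRow hX,
    det_unique (1 + _ : Matrix Unit Unit ℂ), Matrix.mul_assoc, ← replicateCol_mulVec]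
  simp [replicateRow_mul_replicateCol_apply]

end Matrix

section Kraus

variable {ι I J : Type*} [Fintype ι] [Fintype I] (A : ι → Matrix J I ℂ)

def krausMap (X : Matrix I I ℂ) : Matrix J J ℂ := ∑ i, A i * X * (A i)ᴴ

def krausDual [Fintype J] (Y : Matrix J J ℂ) : Matrix I I ℂ := ∑ i, (A i)ᴴ * Y * A i

theorem krausMap_add (X Y : Matrix I I ℂ) :
    krausMap A (X + Y) = krausMap A X + krausMap A Y := by
  simp only [krausMap, Matrix.mul_add, Matrix.add_mul, Finset.sum_add_distrib]

theorem krausMap_smul (z : ℂ) (X : Matrix I I ℂ) : krausMap A (z • X) = z • krausMap A X := by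
  simp only [krausMap, Matrix.mul_smul, Matrix.smul_mul, Finset.smul_sum]

theorem krausMap_vecMulVec_eq_zero {v : I → ℂ} (hv : ∀ i, A i *ᵥ v = 0) (w : I → ℂ) :
    krausMap A (vecMulVec v w) = 0 := by
  simp [krausMap, mul_vecMulVec, hv]

theorem krausMap_posSemidef [Fintype J] {X : Matrix I I ℂ} (hX : X.PosSemidef) :
    (krausMap A X).PosSemidef :=
  posSemidef_sum _ fun i _ => hX.mul_mul_conjTranspose_same (A i)

theorem krausDual_posDef [Fintype J] (hA : ∀ v, (∀ i, A i *ᵥ v = 0) → v = 0)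
    {P : Matrix J J ℂ} (hP : P.PosDef) : (krausDual A P).PosDef := by
  have hPSD : (krausDual A P).PosSemidef :=
    posSemidef_sum _ fun i _ => hP.posSemidef.conjTranspose_mul_mul_same (A i)
  refine .of_dotProduct_mulVec_pos hPSD.1 fun x hx => ?_
  obtain ⟨i, hi⟩ : ∃ i, A i *ᵥ x ≠ 0 := by
    by_contra! h
    exact hx (hA x h)
  have hsum : star x ⬝ᵥ (krausDual A P *ᵥ x) =
      ∑ i, star (A i *ᵥ x) ⬝ᵥ (P *ᵥ (A i *ᵥ x)) := by
    simp [krausDual, sum_mulVec, dotProduct_sum, ← mulVec_mulVec, star_mulVec, dotProduct_mulVec,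
      vecMul_vecMul]
  rw [hsum]
  exact Finset.sum_pos' (fun j _ => hP.posSemidef.dotProduct_mulVec_nonneg _)
    ⟨i, Finset.mem_univ i, hP.dotProduct_mulVec_pos hi⟩

theorem trace_krausMap_mul [Fintype J] (X : Matrix I I ℂ) (Y : Matrix J J ℂ) :
    (krausMap A X * Y).trace = (X * krausDual A Y).trace := by
  simp only [krausMap, krausDual, Finset.sum_mul, Finset.mul_sum, trace_sum]
  refine Finset.sum_congr rfl fun i _ => ?_
  rw [Matrix.mul_assoc, Matrix.mul_assoc, trace_mul_comm, Matrix.mul_assoc, Matrix.mul_assoc]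

theorem krausMap_scaling {I' J' : Type*} [Fintype I'] [Fintype J] (B : Matrix J' J ℂ)
    (C : Matrix I I' ℂ) (X : Matrix I' I' ℂ) :
    krausMap (fun i => B * A i * C) X = B * krausMap A (C * X * Cᴴ) * Bᴴ := by
  simp only [krausMap, Matrix.mul_sum, Matrix.sum_mul, conjTranspose_mul, Matrix.mul_assoc]

theorem krausDual_scaling {I' J' : Type*} [Fintype J] [Fintype J'] (B : Matrix J' J ℂ)
    (C : Matrix I I' ℂ) (Y : Matrix J' J' ℂ) :
    krausDual (fun i => B * A i * C) Y = Cᴴ * krausDual A (Bᴴ * Y * B) * C := by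
  simp only [krausDual, Matrix.mul_sum, Matrix.sum_mul, conjTranspose_mul, Matrix.mul_assoc]

end Kraus

section Capacity

open Filter

variable {I J : Type} [Fintype I] [DecidableEq I] [Fintype J] [DecidableEq J]

theorem capacity_le_re_det {T : Matrix I I ℂ → Matrix J J ℂ} (hcap : 0 < capacity T)
    {X : Matrix I I ℂ} (hX : X.PosDef) (hXdet : X.det = 1) :
    capacity T ≤ (((Fintype.card J : ℂ) / Fintype.card I) • T X).det.re := by
  refine csInf_le ?_ ⟨X, hX, hXdet, rfl⟩
  by_contra h
  rw [capacity, Real.sInf_of_not_bddBelow h] at hcap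
  exact hcap.false

theorem exists_re_det_lt_of_capacity_lt {T : Matrix I I ℂ → Matrix J J ℂ}
    (hcap : 0 < capacity T) {δ : ℝ} (hδ : capacity T < δ) :
    ∃ X : Matrix I I ℂ, X.PosDef ∧ X.det = 1 ∧
      (((Fintype.card J : ℂ) / Fintype.card I) • T X).det.re < δ := by
  have hne : { r : ℝ | ∃ X : Matrix I I ℂ, X.PosDef ∧ X.det = 1 ∧
      r = ((((Fintype.card J : ℂ) / (Fintype.card I : ℂ)) • T X).det).re }.Nonempty := by
    by_contra h
    rw [capacity, Set.not_nonempty_iff_eq_empty.1 h, Real.sInf_empty] at hcap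
    exact hcap.false
  obtain ⟨_, ⟨X, hX, hXdet, rfl⟩, hlt⟩ := exists_lt_of_csInf_lt hne hδ
  exact ⟨X, hX, hXdet, hlt⟩

variable {ι : Type} [Fintype ι] (A : ι → Matrix J I ℂ)

theorem capacity_mul_re_det_rpow_le [Nonempty I] (hcap : 0 < capacity (krausMap A))
    {Y : Matrix I I ℂ} (hY : Y.PosDef) :
    capacity (krausMap A) * Y.det.re ^ ((Fintype.card J : ℝ) / Fintype.card I) ≤
      (((Fintype.card J : ℂ) / Fintype.card I) • krausMap A Y).det.re := by
  set d := Y.det.re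
  set κ : ℝ := (Fintype.card J : ℝ) / Fintype.card I
  have hd : 0 < d := hY.re_det_pos
  have hI : (Fintype.card I : ℝ) ≠ 0 := by positivity
  set s : ℝ := d ^ (-(1 / Fintype.card I : ℝ))
  have hs : 0 < s := Real.rpow_pos_of_pos hd _
  have hsI : s ^ Fintype.card I * d = 1 := by
    rw [← Real.rpow_natCast, ← Real.rpow_mul hd.le, neg_mul, one_div_mul_cancel hI,
      Real.rpow_neg_one, inv_mul_cancel₀ hd.ne']
  have hsJ : s ^ Fintype.card J * d ^ κ = 1 := by
    rw [← Real.rpow_natCast, ← Real.rpow_mul hd.le, ← Real.rpow_add hd]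
    convert Real.rpow_zero d using 2
    simp only [κ]
    field_simp
    ring
  have hsY : ((s : ℂ) • Y).PosDef := hY.smul (by exact_mod_cast hs)
  have hsYdet : ((s : ℂ) • Y).det = 1 := by
    rw [det_smul, ← hY.posSemidef.ofReal_re_det]
    exact_mod_cast hsI
  have h := capacity_le_re_det hcap hsY hsYdet
  rw [krausMap_smul, smul_comm, det_smul, ← Complex.ofReal_pow, Complex.re_ofReal_mul] at h
  calc capacity (krausMap A) * d ^ κ
      ≤ s ^ Fintype.card J * (((Fintype.card J : ℂ) / Fintype.card I) • krausMap A Y).det.re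
          * d ^ κ := by gcongr
    _ = _ := by rw [mul_right_comm, hsJ, one_mul]

theorem capacity_le_re_det_of_one_le_re_det [Nonempty I] (hcap : 0 < capacity (krausMap A))
    {Y : Matrix I I ℂ} (hY : Y.PosDef) (hYdet : 1 ≤ Y.det.re) :
    capacity (krausMap A) ≤ (((Fintype.card J : ℂ) / Fintype.card I) • krausMap A Y).det.re :=
  (le_mul_of_one_le_right hcap.le (Real.one_le_rpow hYdet (by positivity))).trans
    (capacity_mul_re_det_rpow_le A hcap hY)

/-- Along `X + t v vᴴ` the determinant grows without bound while `T` stays fixed. -/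
theorem eq_zero_of_forall_mulVec_eq_zero_of_capacity_pos [Nonempty J]
    (hcap : 0 < capacity (krausMap A)) {v : I → ℂ} (hv : ∀ i, A i *ᵥ v = 0) : v = 0 := by
  by_contra hv0
  have : Nonempty I := (Function.ne_iff.1 hv0).nonempty
  obtain ⟨X, hX, hXdet, -⟩ := exists_re_det_lt_of_capacity_lt hcap (lt_add_one _)
  set κ : ℝ := (Fintype.card J : ℝ) / Fintype.card I
  have hκ : 0 < κ := by positivity
  set q := (star v ⬝ᵥ (X⁻¹ *ᵥ v)).re
  have hq : 0 < q := by simpa using hX.inv.re_dotProduct_pos hv0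
  set F := (((Fintype.card J : ℂ) / Fintype.card I) • krausMap A X).det.re
  have hbound : ∀ t : ℝ, 0 ≤ t → capacity (krausMap A) * (1 + t * q) ^ κ ≤ F := by
    intro t ht
    have hY : (X + vecMulVec ((t : ℂ) • v) (star v)).PosDef := by
      rw [smul_vecMulVec]
      exact hX.add_posSemidef ((posSemidef_vecMulVec_self_star v).smul (by exact_mod_cast ht))
    have hdet : (X + vecMulVec ((t : ℂ) • v) (star v)).det.re = 1 + t * q := by
      rw [det_add_vecMulVec (hXdet ▸ isUnit_one), hXdet, mulVec_smul, dotProduct_smul]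
      simp [q]
    have hT : krausMap A (X + vecMulVec ((t : ℂ) • v) (star v)) = krausMap A X := by
      rw [krausMap_add, smul_vecMulVec, krausMap_smul, krausMap_vecMulVec_eq_zero A hv, smul_zero,
        add_zero]
    simpa only [hdet, hT] using capacity_mul_re_det_rpow_le A hcap hY
  have htend : Tendsto (fun t : ℝ => capacity (krausMap A) * (1 + t * q) ^ κ) atTop atTop :=
    ((tendsto_rpow_atTop hκ).comp
      (tendsto_atTop_add_const_left _ 1 (tendsto_id.atTop_mul_const hq))).const_mul_atTop hcap
  obtain ⟨t, hFt, ht⟩ := ((htend.eventually_gt_atTop F).and (eventually_ge_atTop 0)).exists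
  exact (hbound t ht).not_gt hFt

theorem exists_scaling_krausDual_eq_one [Nonempty I] [Nonempty J]
    (hcap : 0 < capacity (krausMap A)) {X : Matrix I I ℂ} (hX : X.PosDef) (hXdet : X.det = 1) :
    ∃ (B : Matrix J J ℂ) (C : Matrix I I ℂ), IsUnit B ∧ IsUnit C ∧
      krausDual (fun i => B * A i * C) 1 = 1 ∧
      capacity (krausMap A) ≤
        (((Fintype.card J : ℂ) / Fintype.card I) • krausMap A X).det.re *
          (((Fintype.card J : ℂ) / Fintype.card I) • krausMap (fun i => B * A i * C) 1).det.re := by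
  set c : ℂ := (Fintype.card J : ℂ) / Fintype.card I
  have hc : 0 < c := by
    have : c = ((Fintype.card J / Fintype.card I : ℝ) : ℂ) := by push_cast; rfl
    rw [this, Complex.zero_lt_real]
    positivity
  set G := c • krausMap A X
  have hGcap : capacity (krausMap A) ≤ G.det.re := capacity_le_re_det hcap hX hXdet
  have hG : G.PosDef := by
    refine ((krausMap_posSemidef A hX.posSemidef).smul hc.le).posDef_iff_det_ne_zero.2 fun h => ?_
    rw [h, Complex.zero_re] at hGcap
    exact hcap.not_ge hGcap
  obtain ⟨B, hB, hBG⟩ := hG.exists_isUnit_mul_mul_conjTranspose_eq_one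
  set S := krausDual A (Bᴴ * B)
  have hS : S.PosDef :=
    krausDual_posDef A (fun _ => eq_zero_of_forall_mulVec_eq_zero_of_capacity_pos A hcap)
      (.conjTranspose_mul_self B (mulVec_injective_of_isUnit hB))
  have hStr : (X * S).trace = Fintype.card I := by
    have hBXB : B * krausMap A X * Bᴴ = c⁻¹ • 1 := by
      rw [← hBG, Matrix.mul_smul, Matrix.smul_mul, smul_smul, inv_mul_cancel₀ hc.ne', one_smul]
    rw [← trace_krausMap_mul, ← Matrix.mul_assoc, trace_mul_cycle, hBXB, trace_smul, trace_one,
      smul_eq_mul, inv_mul_eq_div, div_div_cancel₀ (by simp)]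
  have hSdet : S.det.re ≤ 1 := hX.re_det_le_one_of_trace_mul_eq hXdet hS hStr
  obtain ⟨V, hV, hVS⟩ := hS.exists_isUnit_mul_mul_conjTranspose_eq_one
  refine ⟨B, Vᴴ, hB, hV.star, ?_, ?_⟩
  · rw [krausDual_scaling, Matrix.mul_one, conjTranspose_conjTranspose]
    exact hVS
  have hSinv : capacity (krausMap A) ≤ (c • krausMap A S⁻¹).det.re := by
    refine capacity_le_re_det_of_one_le_re_det A hcap hS.inv ?_
    rw [hS.re_det_inv]
    exact (one_le_inv₀ hS.re_det_pos).2 hSdet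
  have hBdet : Complex.normSq B.det * G.det.re = 1 := by
    rw [← Complex.re_ofReal_mul, ← det_mul_mul_conjTranspose, hBG, det_one, Complex.one_re]
  have hQ : (c • krausMap (fun i => B * A i * Vᴴ) 1).det.re =
      Complex.normSq B.det * (c • krausMap A S⁻¹).det.re := by
    rw [krausMap_scaling, Matrix.mul_one, conjTranspose_conjTranspose,
      ← inv_eq_conjTranspose_mul_self_of_mul_mul_conjTranspose_eq_one hVS, ← Matrix.smul_mul,
      ← Matrix.mul_smul, det_mul_mul_conjTranspose, Complex.re_ofReal_mul]
  rwa [hQ, ← mul_assoc, mul_comm G.det.re, hBdet, one_mul]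

end Capacity

theorem dsDist_le_of_krausDual_eq_one {n1 n2 m : ℕ} (hn1 : 0 < n1)
    (A : Fin m → Matrix (Fin n2) (Fin n1) ℂ) (hdual : krausDual A 1 = 1) {a : ℝ}
    (hdet : Real.exp (-a) < (((n2 : ℂ) / n1) • krausMap A 1).det.re) :
    dsDist A ≤ 2 * (n2 + 1) * a := by
  set Q := ((n2 : ℂ) / n1) • krausMap A 1
  have hQdet : 0 < Q.det.re := (Real.exp_pos _).trans hdet
  have hc : (0 : ℂ) ≤ (n2 : ℂ) / n1 := by
    rw [show (n2 : ℂ) / n1 = ((n2 / n1 : ℝ) : ℂ) by push_cast; rfl, Complex.zero_le_real]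
    positivity
  have hQ : Q.PosDef := by
    refine ((krausMap_posSemidef A .one).smul hc).posDef_iff_det_ne_zero.2 fun h => ?_
    rw [h, Complex.zero_re] at hQdet
    exact hQdet.false
  have htr : Q.trace = Fintype.card (Fin n2) := by
    rw [trace_smul, ← Matrix.mul_one (krausMap A 1), trace_krausMap_mul, hdual, Matrix.mul_one,
      trace_one, Fintype.card_fin, Fintype.card_fin, smul_eq_mul, div_mul_cancel₀]
    exact_mod_cast hn1.ne'
  have hds : dsDist A = ((Q - 1) ^ 2).trace.re := by
    have hsum : ∑ i, (A i)ᴴ * A i = 1 := by simpa [krausDual] using hdual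
    simp [dsDist, Q, krausMap, hsum]
  have hlog : -a < Real.log Q.det.re := (Real.lt_log_iff_exp_lt hQdet).2 hdet
  rw [hds]
  calc ((Q - 1) ^ 2).trace.re ≤ 2 * (Fintype.card (Fin n2) + 1) * -Real.log Q.det.re :=
        hQ.re_trace_sub_one_sq_le htr
    _ ≤ 2 * (n2 + 1) * a := by
        rw [Fintype.card_fin]
        gcongr
        linarith

/-- If `T : M_{n1}(ℂ) → M_{n2}(ℂ)` is completely positive with
`cap(T) > 0`, then for every `ε > 0` there is an operator scaling `T'` of `T`, with Kraus
operators `B·Aᵢ·C` for invertible `B, C`, such that `ds(T') ≤ ε`. -/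
theorem exists_scaling_ds_le {n1 n2 m : ℕ} (hn1 : 0 < n1) (hn2 : 0 < n2)
    (A : Fin m → Matrix (Fin n2) (Fin n1) ℂ)
    (hcap : 0 < capacity (fun X : Matrix (Fin n1) (Fin n1) ℂ => ∑ i, A i * X * (A i)ᴴ))
    (ε : ℝ) (hε : 0 < ε) :
    ∃ (Bm : Matrix (Fin n2) (Fin n2) ℂ) (Cm : Matrix (Fin n1) (Fin n1) ℂ),
      IsUnit Bm ∧ IsUnit Cm ∧ dsDist (fun i => Bm * A i * Cm) ≤ ε := by
  change 0 < capacity (krausMap A) at hcap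
  have : Nonempty (Fin n1) := ⟨⟨0, hn1⟩⟩
  have : Nonempty (Fin n2) := ⟨⟨0, hn2⟩⟩
  set a := ε / (2 * (n2 + 1))
  have ha : 0 < a := by positivity
  obtain ⟨X, hX, hXdet, hXlt⟩ :=
    exists_re_det_lt_of_capacity_lt hcap (lt_mul_of_one_lt_right hcap (Real.one_lt_exp_iff.2 ha))
  have hXcap := capacity_le_re_det hcap hX hXdet
  obtain ⟨B, C, hB, hC, hdual, hle⟩ := exists_scaling_krausDual_eq_one A hcap hX hXdet
  simp only [Fintype.card_fin] at hXlt hXcap hle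
  refine ⟨B, C, hB, hC, (dsDist_le_of_krausDual_eq_one hn1 _ hdual (a := a) ?_).trans_eq ?_⟩
  · have hexp : Real.exp (-a) * Real.exp a = 1 := by
      rw [← Real.exp_add, neg_add_cancel, Real.exp_zero]
    nlinarith [mul_lt_mul_of_pos_left hXlt (Real.exp_pos (-a))]
  · exact mul_div_cancel₀ ε (by positivity)
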